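/- In the setting of Theorem 1, the squared H₂ norm (1/M̂²)·Tr(P⁻¹(M̂ J L⁻¹ + K)) is a nondecreasing function of σ̂² on the interval where P remains positive definite, and tends to +∞ as σ̂² approaches the critical value 2β/(M̂(β² + λ_max(L)M̂)), provided M̂ J L⁻¹ + K is positive definite. -/

import Mathlib

/-!
Write `X = M J L⁻¹ + K` and diagonalise `L = U diag(μ) Uᵀ`. Then `P(s) = U diag(2β/M - s κᵢ) Uᵀ`
with `κᵢ = β² + M μᵢ > 0`, so `Tr(P(s)⁻¹ X) = Σᵢ cᵢ / (2β/M - s κᵢ)` with `cᵢ = (Uᵀ X U)ᵢᵢ > 0`.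
Each summand increases with `s` while its denominator is positive. For `0 < s < sc = 2β/(M κ_max)`
all denominators are positive, and the summand of the largest eigenvalue is a positive multiple
of `(sc - s)⁻¹`.
-/

open Matrix Filter Topology Set

namespace Matrix

variable {n : Type*} [Fintype n] [DecidableEq n]

theorem trace_mul_diagonal_mul_mul {R : Type*} [CommSemiring R] (U V X : Matrix n n R)
    (w : n → R) : (U * diagonal w * V * X).trace = ∑ i, w i * (V * X * U) i i := by
  rw [Matrix.mul_assoc (U * diagonal w), trace_mul_comm, ← Matrix.mul_assoc]
  simp only [trace, diag, mul_diagonal, mul_comm]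

theorem inv_diagonal_of_ne_zero {K : Type*} [Field K] {w : n → K} (hw : ∀ i, w i ≠ 0) :
    (diagonal w)⁻¹ = diagonal w⁻¹ :=
  inv_eq_right_inv <| by
    rw [diagonal_mul_diagonal, ← diagonal_one]
    exact congrArg diagonal (funext fun i => mul_inv_cancel₀ (hw i))

theorem inv_mul_mul_star_of_mem_unitary {K : Type*} [Field K] [StarRing K] {U : Matrix n n K}
    (hU : U ∈ unitary (Matrix n n K)) (A : Matrix n n K) :
    (U * A * star U)⁻¹ = U * A⁻¹ * star U := by
  rw [mul_inv_rev, mul_inv_rev, inv_eq_left_inv (Unitary.mul_star_self_of_mem hU),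
    inv_eq_right_inv (Unitary.mul_star_self_of_mem hU), Matrix.mul_assoc]

namespace IsHermitian

variable {A : Matrix n n ℝ} (hA : A.IsHermitian)
include hA

theorem smul_one_sub_smul_eq_conj_diagonal (a b : ℝ) :
    a • 1 - b • A = (hA.eigenvectorUnitary : Matrix n n ℝ) *
      diagonal (fun i => a - b * hA.eigenvalues i) *
        star (hA.eigenvectorUnitary : Matrix n n ℝ) := by
  have hdiag :
      diagonal (fun i => a - b * hA.eigenvalues i) = a • 1 - b • diagonal hA.eigenvalues := by
    ext i j
    rcases eq_or_ne i j with rfl | hij <;> simp [*]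
  conv_lhs => rw [hA.spectral_theorem]
  rw [hdiag, ← Unitary.conjStarAlgAut_apply (S := ℝ), map_sub, map_smul, map_smul, map_one]
  rfl

theorem posDef_smul_one_sub_smul_iff (a b : ℝ) :
    (a • 1 - b • A).PosDef ↔ ∀ i, 0 < a - b * hA.eigenvalues i := by
  rw [hA.smul_one_sub_smul_eq_conj_diagonal,
    IsUnit.posDef_star_right_conjugate_iff Unitary.isUnit_coe, posDef_diagonal_iff]

theorem trace_inv_smul_one_sub_smul_mul {a b : ℝ} (h : ∀ i, a - b * hA.eigenvalues i ≠ 0)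
    (X : Matrix n n ℝ) :
    ((a • 1 - b • A)⁻¹ * X).trace = ∑ i, (a - b * hA.eigenvalues i)⁻¹ *
      (star (hA.eigenvectorUnitary : Matrix n n ℝ) * X * hA.eigenvectorUnitary) i i := by
  rw [hA.smul_one_sub_smul_eq_conj_diagonal,
    inv_mul_mul_star_of_mem_unitary hA.eigenvectorUnitary.2, inv_diagonal_of_ne_zero h,
    trace_mul_diagonal_mul_mul]
  rfl

end IsHermitian

end Matrix

section
variable {ι : Type*} {α : ℝ} {κ c : ι → ℝ}

theorem monotoneOn_sum_inv_sub_mul_mul [Fintype ι] (hκ : ∀ i, 0 ≤ κ i) (hc : ∀ i, 0 ≤ c i) :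
    MonotoneOn (fun x => ∑ i, (α - x * κ i)⁻¹ * c i) {x | ∀ i, 0 < α - x * κ i} := by
  intro x _ y hy hxy
  dsimp only
  gcongr with i
  · exact hc i
  · exact hy i
  · exact hκ i

theorem sub_mul_pos_of_mem_Ioo {i₀ : ι} (hmax : ∀ i, κ i ≤ κ i₀) (hκ₀ : 0 < κ i₀) {x : ℝ}
    (hx : x ∈ Ioo 0 (α / κ i₀)) (i : ι) : 0 < α - x * κ i := by
  have h₀ : x * κ i₀ < α := (lt_div_iff₀ hκ₀).mp hx.2
  nlinarith [hmax i, hx.1]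

theorem tendsto_sum_inv_sub_mul_mul_atTop [Fintype ι] (hα : 0 < α) (hc : ∀ i, 0 ≤ c i) {i₀ : ι}
    (hmax : ∀ i, κ i ≤ κ i₀) (hκ₀ : 0 < κ i₀) (hc₀ : 0 < c i₀) :
    Tendsto (fun x => ∑ i, (α - x * κ i)⁻¹ * c i) (𝓝[<] (α / κ i₀)) atTop := by
  have hgap : Tendsto (fun x => α - x * κ i₀) (𝓝[<] (α / κ i₀)) (𝓝[>] 0) := by
    refine tendsto_nhdsWithin_of_tendsto_nhds_of_eventually_within _ ?_ ?_
    · refine (Continuous.tendsto' (by fun_prop) (α / κ i₀) 0 ?_).mono_left nhdsWithin_le_nhds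
      rw [div_mul_cancel₀ α hκ₀.ne', sub_self]
    · filter_upwards [self_mem_nhdsWithin] with x hx
      exact sub_pos.mpr ((lt_div_iff₀ hκ₀).mp hx)
  refine tendsto_atTop_mono' _ ?_ (hgap.inv_tendsto_nhdsGT_zero.atTop_mul_const hc₀)
  filter_upwards [Ioo_mem_nhdsLT (div_pos hα hκ₀)] with x hx
  have hpos := sub_mul_pos_of_mem_Ioo hmax hκ₀ hx
  exact Finset.single_le_sum (f := fun i => (α - x * κ i)⁻¹ * c i)
    (fun i _ => mul_nonneg (inv_pos.mpr (hpos i)).le (hc i)) (Finset.mem_univ i₀)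

end

theorem stmt9_general {N : ℕ} (hN : 0 < N) (L J K : Matrix (Fin N) (Fin N) ℝ)
    (hL : L.PosDef)
    (M β : ℝ) (hM : 0 < M) (hβ : 0 < β)
    (hX : (M • (J * L⁻¹) + K).PosDef)
    (P : ℝ → Matrix (Fin N) (Fin N) ℝ)
    (hP : ∀ s, P s = (2 * β / M - s * β ^ 2) • (1 : Matrix (Fin N) (Fin N) ℝ) - (s * M) • L)
    (f : ℝ → ℝ)
    (hf : ∀ s, f s = (1 / M ^ 2) * ((P s)⁻¹ * (M • (J * L⁻¹) + K)).trace)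
    (sc : ℝ) (hsc : sc = 2 * β / (M * (β ^ 2 + (⨆ j, hL.1.eigenvalues j) * M))) :
    MonotoneOn f {s : ℝ | 0 ≤ s ∧ (P s).PosDef} ∧
      Filter.Tendsto f (nhdsWithin sc (Set.Iio sc)) Filter.atTop := by
  set U : Matrix (Fin N) (Fin N) ℝ := (hL.1.eigenvectorUnitary : Matrix (Fin N) (Fin N) ℝ)
  set κ : Fin N → ℝ := fun i => β ^ 2 + M * hL.1.eigenvalues i
  set c : Fin N → ℝ := fun i => (star U * (M • (J * L⁻¹) + K) * U) i i
  have hκ : ∀ i, 0 < κ i := fun i => by have := hL.eigenvalues_pos i; positivity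
  have hc : ∀ i, 0 < c i := fun i =>
    (Unitary.isUnit_coe.posDef_star_left_conjugate_iff.mpr hX).diag_pos
  have hg : ∀ s i, 2 * β / M - s * β ^ 2 - s * M * hL.1.eigenvalues i = 2 * β / M - s * κ i :=
    fun s i => by ring
  have hPpos : ∀ s, (P s).PosDef → ∀ i, 0 < 2 * β / M - s * κ i := fun s => by
    rw [hP, hL.1.posDef_smul_one_sub_smul_iff]
    simp only [hg, imp_self]
  have hf_eq : ∀ s, (∀ i, 0 < 2 * β / M - s * κ i) →
      f s = 1 / M ^ 2 * ∑ i, (2 * β / M - s * κ i)⁻¹ * c i := fun s hs => by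
    rw [hf, hP, hL.1.trace_inv_smul_one_sub_smul_mul (by simpa only [hg] using fun i => (hs i).ne')]
    simp only [hg]
    rfl
  have : Nonempty (Fin N) := ⟨⟨0, hN⟩⟩
  obtain ⟨i₀, hi₀⟩ := exists_eq_ciSup_of_finite (f := hL.1.eigenvalues)
  have hmax : ∀ i, κ i ≤ κ i₀ := fun i => by
    have := hi₀ ▸ le_ciSup (Finite.bddAbove_range _) i
    dsimp only [κ]; gcongr
  have hsc' : sc = 2 * β / M / κ i₀ := by
    rw [hsc, ← hi₀]; field_simp; ring
  constructor
  · intro s hs t ht hst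
    rw [hf_eq s (hPpos s hs.2), hf_eq t (hPpos t ht.2)]
    exact mul_le_mul_of_nonneg_left (monotoneOn_sum_inv_sub_mul_mul (fun i => (hκ i).le)
      (fun i => (hc i).le) (hPpos s hs.2) (hPpos t ht.2) hst) (by positivity)
  · rw [hsc']
    refine ((tendsto_sum_inv_sub_mul_mul_atTop (by positivity) (fun i => (hc i).le) hmax (hκ i₀)
      (hc i₀)).const_mul_atTop (by positivity : (0 : ℝ) < 1 / M ^ 2)).congr' ?_
    filter_upwards [Ioo_mem_nhdsLT (div_pos (by positivity) (hκ i₀))] with s hs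
    exact (hf_eq s (sub_mul_pos_of_mem_Ioo hmax (hκ i₀) hs)).symm

/-- The squared `H₂` norm `(1/M̂²)·Tr(P(σ̂²)⁻¹(M̂ J L⁻¹ + K))` is nondecreasing in `σ̂²`
on the region where `P(σ̂²)` is positive definite, and blows up to `+∞` as `σ̂²`
approaches the critical value `2β/(M̂(β² + λ_max(L)M̂))`. -/
theorem stmt9 {N : ℕ} (hN : 0 < N) (L J K : Matrix (Fin N) (Fin N) ℝ)
    (hL : L.PosDef) (hJ : J.PosSemidef) (hK : K.PosSemidef)
    (M β : ℝ) (hM : 0 < M) (hβ : 0 < β)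
    (hX : (M • (J * L⁻¹) + K).PosDef)
    (P : ℝ → Matrix (Fin N) (Fin N) ℝ)
    (hP : ∀ s, P s = (2 * β / M - s * β ^ 2) • (1 : Matrix (Fin N) (Fin N) ℝ) - (s * M) • L)
    (f : ℝ → ℝ)
    (hf : ∀ s, f s = (1 / M ^ 2) * ((P s)⁻¹ * (M • (J * L⁻¹) + K)).trace)
    (sc : ℝ) (hsc : sc = 2 * β / (M * (β ^ 2 + (⨆ j, hL.1.eigenvalues j) * M))) :
    MonotoneOn f {s : ℝ | 0 ≤ s ∧ (P s).PosDef} ∧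
      Filter.Tendsto f (nhdsWithin sc (Set.Iio sc)) Filter.atTop :=
  stmt9_general hN L J K hL M β hM hβ hX P hP f hf sc hsc
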